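/- arXiv:1611.05652 — 2 statements merged into one kernel-verified Lean document; each statement's English description precedes it below -/
import Mathlib

section
/- Let G be an additive abelian group of order v and let D_1, D_2 be two sets of size (v-1)/2 partitioning the nonzero elements of G. Then {D_1, D_2} is a (v,2,(v-1)/2,(v-1)/4)-SEDF if and only if D_1 is a Paley-type partial difference set with parameters (v,(v-1)/2,(v-5)/4,(v-1)/4). -/
open Finset

/-- The multiset of external differences `{x - y : x ∈ A, y ∈ B}`. -/
def extDiffs {G : Type*} [AddCommGroup G] [DecidableEq G] (A B : Finset G) : Multiset G :=
  (A ×ˢ B).val.map (fun p => p.1 - p.2)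

/-- An `(n, m, k, λ)`-strong external difference family in `G` (with `n = |G|`):
`m ≥ 2` disjoint `k`-subsets such that for each `i` the multiset of external
differences from `A i` equals `λ` copies of `G \ {0}`. -/
def IsSEDF {G : Type*} [AddCommGroup G] [Fintype G] [DecidableEq G]
    (m k l : ℕ) (A : Fin m → Finset G) : Prop :=
  2 ≤ m ∧ (∀ i, (A i).card = k) ∧
  (∀ i j, i ≠ j → Disjoint (A i) (A j)) ∧
  ∀ i, (∑ j ∈ Finset.univ.erase i, extDiffs (A i) (A j))
      = l • (Finset.univ.erase (0 : G)).val

/-- `D` is a `(v, k, l, mu)` partial difference set in `G`: `|G| = v`, `|D| = k`, and the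
multiset of differences of distinct elements of `D` contains each nonzero element of `D`
exactly `l` times and each nonzero element outside `D` exactly `mu` times. -/
def IsPDS {G : Type*} [AddCommGroup G] [Fintype G] [DecidableEq G]
    (v k l mu : ℕ) (D : Finset G) : Prop :=
  Fintype.card G = v ∧ D.card = k ∧
  ∀ g : G, g ≠ 0 →
    Multiset.count g
      ((((D ×ˢ D).filter (fun p => p.1 ≠ p.2)).val).map (fun p => p.1 - p.2)) =
    if g ∈ D then l else mu

/-- A regular PDS: a PDS with `0 ∉ D` and `D = -D`. -/
def IsRegularPDS {G : Type*} [AddCommGroup G] [Fintype G] [DecidableEq G]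
    (v k l mu : ℕ) (D : Finset G) : Prop :=
  IsPDS v k l mu D ∧ (0 : G) ∉ D ∧ ∀ d ∈ D, -d ∈ D

lemma count_extDiffs {G : Type*} [AddCommGroup G] [DecidableEq G] (A B : Finset G) (g : G) :
    Multiset.count g (extDiffs A B) = (B.filter (fun y => y + g ∈ A)).card := by
  unfold extDiffs
  rw [Multiset.count_map]
  show ((A ×ˢ B).filter (fun p => g = p.1 - p.2)).card = _
  apply Finset.card_bij (fun p _ => p.2)
  · intro p hp
    simp only [Finset.mem_filter, Finset.mem_product] at hp
    simp only [Finset.mem_filter]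
    refine ⟨hp.1.2, ?_⟩
    have : p.1 = p.2 + g := by rw [hp.2]; abel
    rw [← this]; exact hp.1.1
  · intro p hp q hq h
    simp only [Finset.mem_filter, Finset.mem_product] at hp hq
    have h1 : p.1 = p.2 + g := by rw [hp.2]; abel
    have h2 : q.1 = q.2 + g := by rw [hq.2]; abel
    ext
    · rw [h1, h2, h]
    · exact h
  · intro y hy
    simp only [Finset.mem_filter] at hy
    refine ⟨(y + g, y), ?_, rfl⟩
    simp only [Finset.mem_filter, Finset.mem_product]
    exact ⟨⟨hy.2, hy.1⟩, by abel⟩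

lemma pds_count {G : Type*} [AddCommGroup G] [DecidableEq G] (D : Finset G) {g : G} (hg : g ≠ 0) :
    Multiset.count g ((((D ×ˢ D).filter (fun p => p.1 ≠ p.2)).val).map (fun p => p.1 - p.2)) =
      Multiset.count g (extDiffs D D) := by
  unfold extDiffs
  rw [Multiset.count_map, Multiset.count_map, Finset.filter_val, Multiset.filter_filter]
  congr 1
  apply Multiset.filter_congr
  intro p _
  constructor
  · exact fun h => h.1
  · intro h
    refine ⟨h, fun hne => hg ?_⟩
    rw [h, hne, sub_self]

lemma even_card_of_neg_closed {G : Type*} [AddCommGroup G] [DecidableEq G] (S : Finset G)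
    (h : ∀ d ∈ S, -d ∈ S) (h2 : ∀ d ∈ S, -d ≠ d) : Even S.card := by
  induction S using Finset.strongInductionOn with
  | _ S ih =>
    rcases S.eq_empty_or_nonempty with rfl | ⟨d, hd⟩
    · simp
    · have hnd : -d ∈ S := h d hd
      have hne : -d ≠ d := h2 d hd
      have hsub : (S.erase d).erase (-d) ⊂ S :=
        (Finset.erase_subset _ _).trans_ssubset (Finset.erase_ssubset hd)
      have hcard : ((S.erase d).erase (-d)).card = S.card - 2 := by
        rw [Finset.card_erase_of_mem (Finset.mem_erase.mpr ⟨hne, hnd⟩),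
          Finset.card_erase_of_mem hd]
        omega
      have h2le : 2 ≤ S.card := by
        have hss : ({-d, d} : Finset G) ⊆ S := by
          intro x hx; simp at hx; rcases hx with rfl | rfl <;> assumption
        have := Finset.card_le_card hss
        rwa [Finset.card_pair hne] at this
      have heven := ih _ hsub ?_ ?_
      · rw [hcard] at heven
        rcases heven with ⟨m, hm⟩
        exact ⟨m + 1, by omega⟩
      · intro e he
        simp only [Finset.mem_erase] at he ⊢
        refine ⟨fun hc => he.2.1 (neg_inj.mp hc), fun hc => he.1 (neg_eq_iff_eq_neg.mp hc),
          h e he.2.2⟩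
      · intro e he
        simp only [Finset.mem_erase] at he
        exact h2 e he.2.2

lemma nat_half {a b : ℕ} (h : a * a = b * (a + a)) (ha : 0 < a) : a = 2 * b := by
  have h2 : a * a = (2 * b) * a := by rw [h]; ring
  exact Nat.eq_of_mul_eq_mul_right ha h2

lemma filterG {G : Type*} [AddCommGroup G] [Fintype G] [DecidableEq G] (E : Finset G) (g : G) :
    ((Finset.univ.erase (0 : G)).filter (fun y => y + g ∈ E)).card = (E.erase g).card := by
  apply Finset.card_bij (fun y _ => y + g)
  · intro y hy
    simp only [Finset.mem_filter, Finset.mem_erase, Finset.mem_univ, and_true] at hy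
    simp only [Finset.mem_erase]
    exact ⟨fun hc => hy.1 (by simpa using hc), hy.2⟩
  · intro y _ z _ h
    exact add_right_cancel h
  · intro x hx
    simp only [Finset.mem_erase] at hx
    refine ⟨x - g, ?_, by abel⟩
    simp only [Finset.mem_filter, Finset.mem_erase, Finset.mem_univ, and_true]
    constructor
    · intro hc
      exact hx.1 (by rw [sub_eq_zero] at hc; exact hc)
    · rw [sub_add_cancel]; exact hx.2

theorem stmt17 {G : Type*} [AddCommGroup G] [Fintype G] [DecidableEq G]
    (v : ℕ) (hv : Fintype.card G = v) (D₁ D₂ : Finset G)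
    (hdisj : Disjoint D₁ D₂) (hpart : D₁ ∪ D₂ = Finset.univ.erase (0 : G))
    (hc₁ : D₁.card = (v - 1) / 2) (hc₂ : D₂.card = (v - 1) / 2) :
    IsSEDF 2 ((v - 1) / 2) ((v - 1) / 4) ![D₁, D₂] ↔
      IsRegularPDS v ((v - 1) / 2) ((v - 5) / 4) ((v - 1) / 4) D₁ := by
  have hv1 : 1 ≤ v := hv ▸ Fintype.card_pos
  have hcard : (Finset.univ.erase (0 : G)).card = v - 1 := by
    rw [Finset.card_erase_of_mem (Finset.mem_univ 0), Finset.card_univ, hv]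
  have huv : v - 1 = D₁.card + D₂.card := by
    rw [← Finset.card_union_of_disjoint hdisj, hpart, hcard]
  have h0not : (0 : G) ∉ D₁ := by
    intro h0
    have : (0 : G) ∈ D₁ ∪ D₂ := Finset.mem_union_left _ h0
    rw [hpart] at this
    exact (Finset.mem_erase.mp this).1 rfl
  have hmemOr : ∀ x : G, (x ∈ D₁ ∨ x ∈ D₂) ↔ x ≠ 0 := by
    intro x
    rw [← Finset.mem_union, hpart]
    simp
  -- count of g (≠ 0) in l • (G \ {0})
  have crhs : ∀ (l : ℕ) {g : G}, g ≠ 0 →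
      Multiset.count g (l • (Finset.univ.erase (0 : G)).val) = l := by
    intro l g hg
    rw [Multiset.count_nsmul,
      Multiset.count_eq_one_of_mem (Finset.univ.erase (0 : G)).nodup
        (Finset.mem_val.mpr (Finset.mem_erase.mpr ⟨hg, Finset.mem_univ g⟩)),
      mul_one]
  have crhs0 : ∀ l : ℕ, Multiset.count (0 : G) (l • (Finset.univ.erase (0 : G)).val) = 0 := by
    intro l
    rw [Multiset.count_nsmul, Multiset.count_eq_zero.mpr
      (fun hmem => (Finset.mem_erase.mp (Finset.mem_val.mp hmem)).1 rfl), mul_zero]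
  -- key counting identities
  have key2 : ∀ g : G,
      (D₁.filter (fun y => y + g ∈ D₁)).card + (D₂.filter (fun y => y + g ∈ D₁)).card
        = (D₁.erase g).card := by
    intro g
    rw [← Finset.card_union_of_disjoint (Finset.disjoint_filter_filter hdisj),
      ← Finset.filter_union, hpart, filterG]
  have key3 : ∀ g : G,
      (D₁.filter (fun y => y + g ∈ D₁)).card + (D₁.filter (fun y => y + g ∈ D₂)).card
        = (D₁.erase (-g)).card := by
    intro g
    have hdisj2 : Disjoint (D₁.filter (fun y => y + g ∈ D₁)) (D₁.filter (fun y => y + g ∈ D₂)) := by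
      rw [Finset.disjoint_left]
      intro y hy1 hy2
      simp only [Finset.mem_filter] at hy1 hy2
      exact (Finset.disjoint_left.mp hdisj hy1.2) hy2.2
    rw [← Finset.card_union_of_disjoint hdisj2, ← Finset.filter_or]
    congr 1
    ext y
    simp only [Finset.mem_filter, Finset.mem_erase]
    rw [hmemOr (y + g)]
    constructor
    · rintro ⟨h1, h2⟩
      exact ⟨fun hc => h2 (by rw [hc, neg_add_cancel]), h1⟩
    · rintro ⟨h1, h2⟩
      exact ⟨h2, fun hc => h1 (eq_neg_of_add_eq_zero_left hc)⟩
  -- sums in SEDF specialize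
  have e0 : Finset.univ.erase (0 : Fin 2) = {1} := by decide
  have e1 : Finset.univ.erase (1 : Fin 2) = {0} := by decide
  have hsum0 : (∑ j ∈ Finset.univ.erase (0 : Fin 2), extDiffs (![D₁, D₂] 0) (![D₁, D₂] j))
      = extDiffs D₁ D₂ := by
    rw [e0, Finset.sum_singleton]
    simp
  have hsum1 : (∑ j ∈ Finset.univ.erase (1 : Fin 2), extDiffs (![D₁, D₂] 1) (![D₁, D₂] j))
      = extDiffs D₂ D₁ := by
    rw [e1, Finset.sum_singleton]
    simp
  constructor
  · rintro ⟨-, -, -, hmain⟩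
    have h1 := hmain 0
    have h2 := hmain 1
    rw [hsum0] at h1
    rw [hsum1] at h2
    have hN12 : ∀ g : G, g ≠ 0 → (D₂.filter (fun y => y + g ∈ D₁)).card = (v - 1) / 4 := by
      intro g hg
      have := congrArg (Multiset.count g) h1
      rwa [count_extDiffs, crhs _ hg] at this
    have hN21 : ∀ g : G, g ≠ 0 → (D₁.filter (fun y => y + g ∈ D₂)).card = (v - 1) / 4 := by
      intro g hg
      have := congrArg (Multiset.count g) h2
      rwa [count_extDiffs, crhs _ hg] at this
    -- size equation
    have hsz : D₁.card * D₂.card = (v - 1) / 4 * (v - 1) := by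
      have h := congrArg Multiset.card h1
      rw [extDiffs, Multiset.card_map, Multiset.card_nsmul] at h
      have h' : (D₁ ×ˢ D₂).card = (v - 1) / 4 * (Finset.univ.erase (0 : G)).card := h
      rwa [Finset.card_product, hcard] at h'
    -- evenness (when D₁ nonempty)
    have hkeven : ∀ g : G, g ≠ 0 → D₁.card = 2 * ((v - 1) / 4) := by
      intro g hg
      have hgE : g ∈ Finset.univ.erase (0 : G) := Finset.mem_erase.mpr ⟨hg, Finset.mem_univ g⟩
      have hpos : 0 < (Finset.univ.erase (0 : G)).card := Finset.card_pos.mpr ⟨g, hgE⟩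
      rw [hcard] at hpos
      have hKpos : 0 < D₁.card := by omega
      have e2 : D₂.card = D₁.card := hc₂.trans hc₁.symm
      have hsz' := hsz
      rw [e2] at hsz'
      have h1' : D₁.card * D₁.card = (v - 1) / 4 * (D₁.card + D₁.card) := by
        rw [hsz']
        congr 1
        omega
      exact nat_half h1' hKpos
    refine ⟨⟨hv, hc₁, ?_⟩, h0not, ?_⟩
    · intro g hg
      rw [pds_count D₁ hg, count_extDiffs]
      have e := key2 g
      rw [hN12 g hg] at e
      have hk2 := hkeven g hg
      by_cases hgD : g ∈ D₁
      · rw [if_pos hgD]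
        rw [Finset.card_erase_of_mem hgD] at e
        omega
      · rw [if_neg hgD]
        rw [Finset.erase_eq_of_notMem hgD] at e
        omega
    · intro d hd
      have hd0 : d ≠ 0 := fun hc => h0not (hc ▸ hd)
      by_contra hnd
      have e1' := key2 d
      rw [hN12 d hd0, Finset.card_erase_of_mem hd] at e1'
      have e2' := key3 d
      rw [hN21 d hd0, Finset.erase_eq_of_notMem hnd] at e2'
      have hpos : 0 < D₁.card := Finset.card_pos.mpr ⟨d, hd⟩
      omega
  · rintro ⟨⟨-, -, hcount⟩, -, hneg⟩
    have hN11 : ∀ g : G, g ≠ 0 →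
        (D₁.filter (fun y => y + g ∈ D₁)).card
          = if g ∈ D₁ then (v - 5) / 4 else (v - 1) / 4 := by
      intro g hg
      have := hcount g hg
      rwa [pds_count D₁ hg, count_extDiffs] at this
    have hparity : Even D₁.card := by
      apply even_card_of_neg_closed D₁ hneg
      intro d hd hc
      have hd0 : d ≠ 0 := fun h0 => h0not (h0 ▸ hd)
      have hdd : (2 : ℕ) • d = 0 := by
        rw [two_nsmul]
        calc d + d = -d + d := by rw [hc]
        _ = 0 := neg_add_cancel d
      have ho2 : addOrderOf d ∣ 2 := addOrderOf_dvd_of_nsmul_eq_zero hdd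
      have hov : addOrderOf d ∣ v := hv ▸ addOrderOf_dvd_card
      have : addOrderOf d = 1 ∨ addOrderOf d = 2 := (Nat.dvd_prime Nat.prime_two).mp ho2
      rcases this with h1 | h1
      · exact hd0 (AddMonoid.addOrderOf_eq_one_iff.mp h1)
      · rw [h1] at hov
        obtain ⟨c, hcv⟩ := hov
        omega
    obtain ⟨m, hm⟩ := hparity
    have hN12' : ∀ g : G, g ≠ 0 → (D₂.filter (fun y => y + g ∈ D₁)).card = (v - 1) / 4 := by
      intro g hg
      have hgE : g ∈ Finset.univ.erase (0 : G) := Finset.mem_erase.mpr ⟨hg, Finset.mem_univ g⟩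
      have hpos : 0 < (Finset.univ.erase (0 : G)).card := Finset.card_pos.mpr ⟨g, hgE⟩
      rw [hcard] at hpos
      have e := key2 g
      rw [hN11 g hg] at e
      by_cases hgD : g ∈ D₁
      · rw [if_pos hgD] at e
        rw [Finset.card_erase_of_mem hgD] at e
        have : 0 < D₁.card := Finset.card_pos.mpr ⟨g, hgD⟩
        omega
      · rw [if_neg hgD] at e
        rw [Finset.erase_eq_of_notMem hgD] at e
        omega
    have hN21' : ∀ g : G, g ≠ 0 → (D₁.filter (fun y => y + g ∈ D₂)).card = (v - 1) / 4 := by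
      intro g hg
      have hgE : g ∈ Finset.univ.erase (0 : G) := Finset.mem_erase.mpr ⟨hg, Finset.mem_univ g⟩
      have hpos : 0 < (Finset.univ.erase (0 : G)).card := Finset.card_pos.mpr ⟨g, hgE⟩
      rw [hcard] at hpos
      have hgg : (-g ∈ D₁) ↔ (g ∈ D₁) :=
        ⟨fun h => by simpa using hneg _ h, fun h => hneg g h⟩
      have e := key3 g
      rw [hN11 g hg] at e
      by_cases hgD : g ∈ D₁
      · rw [if_pos hgD] at e
        rw [Finset.card_erase_of_mem (hgg.mpr hgD)] at e
        have : 0 < D₁.card := Finset.card_pos.mpr ⟨g, hgD⟩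
        omega
      · rw [if_neg hgD] at e
        rw [Finset.erase_eq_of_notMem (fun hc => hgD (hgg.mp hc))] at e
        omega
    refine ⟨le_refl 2, ?_, ?_, ?_⟩
    · intro i
      fin_cases i
      · simpa using hc₁
      · simpa using hc₂
    · intro i j hij
      fin_cases i <;> fin_cases j
      · exact absurd rfl hij
      · simpa using hdisj
      · simpa using hdisj.symm
      · exact absurd rfl hij
    · intro i
      fin_cases i
      · show (∑ j ∈ Finset.univ.erase (0 : Fin 2), extDiffs (![D₁, D₂] 0) (![D₁, D₂] j)) = _
        rw [hsum0]
        refine Multiset.ext.mpr fun g => ?_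
        by_cases hg : g = 0
        · subst hg
          rw [count_extDiffs, crhs0]
          rw [Finset.card_eq_zero]
          apply Finset.filter_false_of_mem
          intro y hy hyD
          rw [add_zero] at hyD
          exact (Finset.disjoint_left.mp hdisj hyD) hy
        · rw [count_extDiffs, hN12' g hg, crhs _ hg]
      · show (∑ j ∈ Finset.univ.erase (1 : Fin 2), extDiffs (![D₁, D₂] 1) (![D₁, D₂] j)) = _
        rw [hsum1]
        refine Multiset.ext.mpr fun g => ?_
        by_cases hg : g = 0
        · subst hg
          rw [count_extDiffs, crhs0]
          rw [Finset.card_eq_zero]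
          apply Finset.filter_false_of_mem
          intro y hy hyD
          rw [add_zero] at hyD
          exact (Finset.disjoint_left.mp hdisj hy) hyD
        · rw [count_extDiffs, hN21' g hg, crhs _ hg]
end

section
/- Suppose {A_1,...,A_m} is an (n,m;k_1,...,k_m;λ_1,...,λ_m)-GSEDF with m ≥ 3. Let Λ = λ_1+...+λ_m and K = k_1+...+k_m. Then for any index i with k_i > λ_i > 1 and 2λ_i ≤ Λ, the inequality (k_i - 1)(Λ - 2λ_i) ≤ (K - k_i)(λ_i - 1) holds. -/
open Finset

/-- An `(n, m; k₁,…,k_m; λ₁,…,λ_m)`-generalized strong external difference family: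
`m` disjoint subsets `A i` of `G` with `|A i| = k i` such that, for each `i`, the
multiset of external differences out of `A i` equals `l i` copies of `G \ {0}`. -/
def IsGSEDF {G : Type*} [AddCommGroup G] [Fintype G] [DecidableEq G]
    (m : ℕ) (k l : Fin m → ℕ) (A : Fin m → Finset G) : Prop :=
  (∀ i, (A i).card = k i) ∧
  (∀ i j, i ≠ j → Disjoint (A i) (A j)) ∧
  ∀ i, (∑ j ∈ Finset.univ.erase i, extDiffs (A i) (A j))
      = l i • (Finset.univ.erase (0 : G)).val

section aux
variable {G : Type*} [AddCommGroup G] [DecidableEq G]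

/-- Number of pairs `(a,b) ∈ A × B` with `a - b = g`. -/
def Ncnt (g : G) (A B : Finset G) : ℕ := ((A ×ˢ B).filter fun p => p.1 - p.2 = g).card

lemma count_extDiffs_s18 (g : G) (A B : Finset G) : (extDiffs A B).count g = Ncnt g A B := by
  rw [extDiffs, Multiset.count_map, Ncnt, Finset.card, Finset.filter]
  congr 1
  exact Multiset.filter_congr (fun p _ => by constructor <;> (intro h; exact h.symm))

lemma Ncnt_eq_snd (g : G) (A B : Finset G) :
    Ncnt g A B = (B.filter (fun b => g + b ∈ A)).card := by
  apply Finset.card_bij' (fun p _ => p.2) (fun b _ => (g + b, b))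
  · intro p hp
    simp only [Ncnt, mem_filter, mem_product] at hp ⊢
    obtain ⟨⟨h1, h2⟩, h3⟩ := hp
    have : p.1 = g + p.2 := by rw [← h3]; abel
    exact ⟨h2, this ▸ h1⟩
  · intro b hb
    simp only [mem_filter] at hb
    simp only [Ncnt, mem_filter, mem_product]
    exact ⟨⟨hb.2, hb.1⟩, by abel⟩
  · intro p hp
    simp only [Ncnt, mem_filter, mem_product] at hp
    obtain ⟨⟨h1, h2⟩, h3⟩ := hp
    have : p.1 = g + p.2 := by rw [← h3]; abel
    exact Prod.ext this.symm rfl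
  · intro b hb; rfl

lemma Ncnt_eq_fst (g : G) (A B : Finset G) :
    Ncnt g A B = (A.filter (fun a => a - g ∈ B)).card := by
  apply Finset.card_bij' (fun p _ => p.1) (fun a _ => (a, a - g))
  · intro p hp
    simp only [Ncnt, mem_filter, mem_product] at hp ⊢
    obtain ⟨⟨h1, h2⟩, h3⟩ := hp
    have : p.1 - g = p.2 := by rw [← h3]; abel
    exact ⟨h1, this ▸ h2⟩
  · intro a ha
    simp only [mem_filter] at ha
    simp only [Ncnt, mem_filter, mem_product]
    exact ⟨⟨ha.1, ha.2⟩, by abel⟩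
  · intro p hp
    simp only [Ncnt, mem_filter, mem_product] at hp
    obtain ⟨⟨h1, h2⟩, h3⟩ := hp
    have : p.1 - g = p.2 := by rw [← h3]; abel
    exact Prod.ext rfl this
  · intro a ha; rfl

lemma Ncnt_neg (g : G) (A B : Finset G) : Ncnt (-g) B A = Ncnt g A B := by
  rw [Ncnt_eq_fst, Ncnt_eq_snd]
  congr 1
  apply Finset.filter_congr
  intro b _
  constructor <;> intro hb <;> [skip; skip] <;>
    simpa [sub_neg_eq_add, add_comm] using hb

lemma Ncnt_biUnion_right {ι : Type*} [DecidableEq ι] (s : Finset ι) (f : ι → Finset G)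
    (h : ∀ j ∈ s, ∀ t ∈ s, j ≠ t → Disjoint (f j) (f t)) (g : G) (A : Finset G) :
    Ncnt g A (s.biUnion f) = ∑ j ∈ s, Ncnt g A (f j) := by
  simp only [Ncnt_eq_snd, Finset.filter_biUnion]
  exact Finset.card_biUnion fun j hj t ht hjt =>
    Finset.disjoint_filter_filter (h j hj t ht hjt)

lemma Ncnt_biUnion_left {ι : Type*} [DecidableEq ι] (s : Finset ι) (f : ι → Finset G)
    (h : ∀ j ∈ s, ∀ t ∈ s, j ≠ t → Disjoint (f j) (f t)) (g : G) (B : Finset G) :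
    Ncnt g (s.biUnion f) B = ∑ j ∈ s, Ncnt g (f j) B := by
  simp only [Ncnt_eq_fst, Finset.filter_biUnion]
  exact Finset.card_biUnion fun j hj t ht hjt =>
    Finset.disjoint_filter_filter (h j hj t ht hjt)

lemma Ncnt_sum_univ [Fintype G] (A B : Finset G) : ∑ g, Ncnt g A B = A.card * B.card := by
  rw [← Finset.card_product]
  exact (Finset.card_eq_sum_card_fiberwise (fun x _ => mem_univ _)).symm

lemma Ncnt_zero_self (A : Finset G) : Ncnt (0 : G) A A = A.card := by
  rw [Ncnt]
  apply Finset.card_bij' (fun (p : G × G) (_ : p ∈ (A ×ˢ A).filter fun p => p.1 - p.2 = 0) => p.1)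
    (fun a (_ : a ∈ A) => (a, a))
  · intro p hp
    simp only [mem_filter, mem_product, sub_eq_zero] at hp
    exact hp.1.1
  · intro a ha
    simp [ha]
  · intro p hp
    simp only [mem_filter, mem_product, sub_eq_zero] at hp
    exact Prod.ext rfl hp.2
  · intro a ha; rfl

lemma Ncnt_zero_disjoint {A B : Finset G} (h : Disjoint A B) : Ncnt (0 : G) A B = 0 := by
  rw [Ncnt, Finset.card_eq_zero, Finset.filter_eq_empty_iff]
  rintro ⟨a, b⟩ hp
  simp only [mem_product] at hp
  simp only [sub_eq_zero]
  intro hab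
  exact (Finset.disjoint_left.1 h hp.1) (hab ▸ hp.2)

end aux

theorem stmt18 {G : Type*} [AddCommGroup G] [Fintype G] [DecidableEq G]
    {m : ℕ} {k l : Fin m → ℕ} {A : Fin m → Finset G}
    (h : IsGSEDF m k l A) (hm : 3 ≤ m)
    (i : Fin m) (hkl : l i < k i) (hl : 1 < l i) (hΛ : 2 * l i ≤ ∑ j, l j) :
    (k i - 1) * ((∑ j, l j) - 2 * l i) ≤ ((∑ j, k j) - k i) * (l i - 1) := by
  classical
  obtain ⟨hcard, hdisj, hlam⟩ := h
  set Λ := ∑ j, l j with hΛdef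
  -- counting consequence of the GSEDF property
  have hcount : ∀ (i' : Fin m) (g : G), g ≠ 0 →
      ∑ j ∈ univ.erase i', Ncnt g (A i') (A j) = l i' := by
    intro i' g hg
    have hcg := congrArg (Multiset.count g) (hlam i')
    rw [Multiset.count_sum', Multiset.count_nsmul,
      Multiset.count_eq_one_of_mem (univ.erase (0:G)).nodup
        (Finset.mem_def.1 (Finset.mem_erase.2 ⟨hg, mem_univ g⟩)), mul_one] at hcg
    simpa [count_extDiffs_s18] using hcg
  have hdisj' : ∀ j ∈ univ.erase i, ∀ t ∈ univ.erase i, j ≠ t → Disjoint (A j) (A t) :=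
    fun j _ t _ hjt => hdisj j t hjt
  set B : Finset G := (univ.erase i).biUnion A with hBdef
  have hAB : Disjoint (A i) B := by
    rw [hBdef, Finset.disjoint_biUnion_right]
    intro j hj
    exact hdisj i j (Ne.symm (Finset.mem_erase.1 hj).1)
  have hBcard : B.card = ∑ j ∈ univ.erase i, k j := by
    rw [hBdef, Finset.card_biUnion hdisj']
    exact Finset.sum_congr rfl fun j _ => hcard j
  have hNAB : ∀ g : G, g ≠ 0 → Ncnt g (A i) B = l i := by
    intro g hg
    rw [hBdef, Ncnt_biUnion_right _ _ hdisj', hcount i g hg]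
  have hNAB0 : Ncnt (0:G) (A i) B = 0 := Ncnt_zero_disjoint hAB
  -- lower bound for internal differences of B
  have hM : ∀ d : G, d ≠ 0 → Λ - 2 * l i ≤ Ncnt d B B := by
    intro d hd
    have hBB : Ncnt d B B = ∑ j ∈ univ.erase i, ∑ t ∈ univ.erase i, Ncnt d (A j) (A t) := by
      rw [hBdef, Ncnt_biUnion_left _ _ hdisj']
      exact Finset.sum_congr rfl fun j _ => Ncnt_biUnion_right _ _ hdisj' _ _
    have h2 : ∀ j ∈ univ.erase i,
        l j = Ncnt d (A j) (A i) + ∑ t ∈ (univ.erase i).erase j, Ncnt d (A j) (A t) := by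
      intro j hj
      have hji : j ≠ i := (Finset.mem_erase.1 hj).1
      have h0 := hcount j d hd
      rw [← Finset.add_sum_erase (univ.erase j) _
        (Finset.mem_erase.2 ⟨Ne.symm hji, mem_univ i⟩), Finset.erase_right_comm] at h0
      exact h0.symm
    have h3 : ∑ j ∈ univ.erase i, Ncnt d (A j) (A i) = l i := by
      rw [← hcount i (-d) (neg_ne_zero.2 hd)]
      exact Finset.sum_congr rfl fun j _ => by rw [← Ncnt_neg (-d) (A i) (A j), neg_neg]
    have h4 : ∑ j ∈ univ.erase i, l j ≤
        l i + ∑ j ∈ univ.erase i, ∑ t ∈ univ.erase i, Ncnt d (A j) (A t) := by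
      calc ∑ j ∈ univ.erase i, l j
          = ∑ j ∈ univ.erase i,
              (Ncnt d (A j) (A i) + ∑ t ∈ (univ.erase i).erase j, Ncnt d (A j) (A t)) :=
            Finset.sum_congr rfl h2
        _ = l i + ∑ j ∈ univ.erase i, ∑ t ∈ (univ.erase i).erase j, Ncnt d (A j) (A t) := by
            rw [Finset.sum_add_distrib, h3]
        _ ≤ l i + ∑ j ∈ univ.erase i, ∑ t ∈ univ.erase i, Ncnt d (A j) (A t) := by
            apply Nat.add_le_add_left
            exact Finset.sum_le_sum fun j _ =>
              Finset.sum_le_sum_of_subset (Finset.erase_subset _ _)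
    have h5 : ∑ j ∈ univ.erase i, l j + l i = Λ := Finset.sum_erase_add univ l (mem_univ i)
    rw [hBB]
    omega
  -- the big double-counted set
  set P : Finset (G × G) := (A i) ×ˢ B with hPdef
  set S : Finset ((G × G) × (G × G)) :=
    (P ×ˢ P).filter (fun pq => pq.1.1 - pq.1.2 = pq.2.1 - pq.2.2 ∧ pq.1 ≠ pq.2) with hSdef
  -- first count : fibers of (pq.1.1 - pq.1.2)
  have hfiberA : ∀ g : G, S.filter (fun pq => pq.1.1 - pq.1.2 = g)
      = (P.filter (fun p => p.1 - p.2 = g)).offDiag := by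
    intro g
    ext pq
    simp only [hSdef, Finset.mem_filter, Finset.mem_offDiag, Finset.mem_product]
    constructor
    · rintro ⟨⟨⟨hp, hq⟩, heq, hne⟩, hg⟩
      exact ⟨⟨hp, hg⟩, ⟨hq, heq.symm.trans hg⟩, hne⟩
    · rintro ⟨⟨hp, hg⟩, ⟨hq, hg'⟩, hne⟩
      exact ⟨⟨⟨hp, hq⟩, hg.trans hg'.symm, hne⟩, hg⟩
  have hSa : S.card = (l i - 1) * (k i * B.card) := by
    have h1 : S.card = ∑ g, (S.filter (fun pq => pq.1.1 - pq.1.2 = g)).card :=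
      Finset.card_eq_sum_card_fiberwise (fun x _ => mem_univ _)
    have h2 : ∀ g : G, (S.filter (fun pq => pq.1.1 - pq.1.2 = g)).card
        = (l i - 1) * Ncnt g (A i) B := by
      intro g
      rw [hfiberA g, Finset.offDiag_card]
      have hPN : (P.filter fun p => p.1 - p.2 = g).card = Ncnt g (A i) B := rfl
      rw [hPN]
      by_cases hg : g = 0
      · subst hg; rw [hNAB0]; simp
      · rw [hNAB g hg, Nat.sub_one_mul]
    rw [h1]
    simp_rw [h2]
    rw [← Finset.mul_sum, Ncnt_sum_univ, hcard i]
  -- second count : fibers of (pq.1.1 - pq.2.1)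
  have hfiberB : ∀ d : G, d ≠ 0 → (S.filter (fun pq => pq.1.1 - pq.2.1 = d)).card
      = Ncnt d (A i) (A i) * Ncnt d B B := by
    intro d hd
    have hprod : Ncnt d (A i) (A i) * Ncnt d B B
        = (((A i ×ˢ A i).filter fun p => p.1 - p.2 = d) ×ˢ
            ((B ×ˢ B).filter fun p => p.1 - p.2 = d)).card := (Finset.card_product _ _).symm
    rw [hprod, hSdef, hPdef]
    refine Finset.card_bij' (fun pq _ => ((pq.1.1, pq.2.1), (pq.1.2, pq.2.2)))
        (fun pq _ => ((pq.1.1, pq.2.1), (pq.1.2, pq.2.2))) ?_ ?_ ?_ ?_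
    · rintro ⟨⟨a, x⟩, ⟨b, y⟩⟩ hpq
      simp only [Finset.mem_filter, Finset.mem_product] at hpq ⊢
      obtain ⟨⟨⟨⟨ha, hx⟩, hb, hy⟩, heq, _⟩, hab⟩ := hpq
      exact ⟨⟨⟨ha, hb⟩, hab⟩, ⟨hx, hy⟩, (sub_eq_sub_iff_sub_eq_sub.1 heq).symm.trans hab⟩
    · rintro ⟨⟨a, b⟩, ⟨x, y⟩⟩ hpq
      simp only [Finset.mem_filter, Finset.mem_product] at hpq ⊢
      obtain ⟨⟨⟨ha, hb⟩, hab⟩, ⟨hx, hy⟩, hxy⟩ := hpq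
      have hne : ((a, x) : G × G) ≠ (b, y) := by
        intro hcontr
        apply hd
        have hab2 : a = b := congrArg Prod.fst hcontr
        rw [← hab, hab2, sub_self]
      exact ⟨⟨⟨⟨ha, hx⟩, hb, hy⟩, sub_eq_sub_iff_sub_eq_sub.1 (hab.trans hxy.symm), hne⟩, hab⟩
    · rintro ⟨⟨a, x⟩, ⟨b, y⟩⟩ _; rfl
    · rintro ⟨⟨a, b⟩, ⟨x, y⟩⟩ _; rfl
  have hSb : (k i * k i - k i) * (Λ - 2 * l i) ≤ S.card := by
    have h1 : S.card = ∑ d, (S.filter (fun pq => pq.1.1 - pq.2.1 = d)).card :=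
      Finset.card_eq_sum_card_fiberwise (fun x _ => mem_univ _)
    have h3 : ∑ d ∈ univ.erase 0, Ncnt d (A i) (A i) = k i * k i - k i := by
      have h4 : ∑ d ∈ univ.erase 0, Ncnt d (A i) (A i) + Ncnt 0 (A i) (A i)
          = ∑ d, Ncnt d (A i) (A i) := Finset.sum_erase_add _ _ (mem_univ 0)
      rw [Ncnt_sum_univ, hcard i, Ncnt_zero_self, hcard i] at h4
      omega
    calc (k i * k i - k i) * (Λ - 2 * l i)
        = ∑ d ∈ univ.erase 0, Ncnt d (A i) (A i) * (Λ - 2 * l i) := by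
          rw [← Finset.sum_mul, h3]
      _ ≤ ∑ d ∈ univ.erase 0, (S.filter (fun pq => pq.1.1 - pq.2.1 = d)).card := by
          apply Finset.sum_le_sum
          intro d hd
          have hd0 : d ≠ 0 := (Finset.mem_erase.1 hd).1
          rw [hfiberB d hd0]
          exact Nat.mul_le_mul_left _ (hM d hd0)
      _ ≤ ∑ d, (S.filter (fun pq => pq.1.1 - pq.2.1 = d)).card :=
          Finset.sum_le_sum_of_subset (Finset.erase_subset _ _)
      _ = S.card := h1.symm
  -- combine
  have key : k i * (k i - 1) * (Λ - 2 * l i) ≤ (l i - 1) * (k i * B.card) := by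
    have hk : k i * k i - k i = k i * (k i - 1) := by rw [Nat.mul_sub_one]
    rw [← hk]
    exact hSb.trans (le_of_eq hSa)
  have key2 : (k i - 1) * (Λ - 2 * l i) ≤ B.card * (l i - 1) := by
    apply Nat.le_of_mul_le_mul_left _ (show 0 < k i by omega)
    calc k i * ((k i - 1) * (Λ - 2 * l i)) = k i * (k i - 1) * (Λ - 2 * l i) :=
          (mul_assoc _ _ _).symm
      _ ≤ (l i - 1) * (k i * B.card) := key
      _ = k i * (B.card * (l i - 1)) := by ring
  have hK : B.card = (∑ j, k j) - k i := by
    have h5 : ∑ j ∈ univ.erase i, k j + k i = ∑ j, k j := Finset.sum_erase_add univ k (mem_univ i)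
    omega
  rw [hK] at key2
  exact key2
end
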